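/- arXiv:2401.04959 — 2 statements merged into one kernel-verified Lean document; each statement's English description precedes it below -/
import Mathlib

section
/- For a = −1/2, the elephant polynomial satisfies R_n(x) = ((x−1)/2)^n + ((x+1)/2)^n for all n ≥ 1. -/
/-!
Write `u = (X - 1)/2` and `v = (X + 1)/2`. The recursion is linear in `R_n`, and since
`1 - X² = -4uv`, `u' = v' = 1/2` and `X - v = u`, it sends `u^n ↦ u^(n+1)` and `v^n ↦ v^(n+1)`
when `a = -1/2`. Induction from `R_1 = X = u + v` finishes the proof.
-/

open Polynomial

/-- The elephant polynomials: `R a 1 = X` and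
`R a (n+1) = X * R a n - (a/n) * (1 - X^2) * (R a n)'` for `n ≥ 1`. -/
noncomputable def elephantR (a : ℝ) : ℕ → Polynomial ℝ
  | 0 => 1
  | 1 => X
  | n + 2 => X * elephantR a (n + 1) -
      C (a / ((n : ℝ) + 1)) * ((1 - X ^ 2) * (elephantR a (n + 1)).derivative)

theorem C_one_div_two_mul_two (K : Type*) [Field K] [CharZero K] : C (1 / 2 : K) * 2 = 1 := by
  rw [← C_ofNat, ← C_mul]
  norm_num

section ElephantStep

variable {K : Type*} [Field K]

noncomputable def elephantStep (a : K) (n : ℕ) (p : K[X]) : K[X] :=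
  X * p - C (a / ((n : K) + 1)) * ((1 - X ^ 2) * p.derivative)

theorem elephantStep_add (a : K) (n : ℕ) (p q : K[X]) :
    elephantStep a n (p + q) = elephantStep a n p + elephantStep a n q := by
  simp only [elephantStep, derivative_add]
  ring

theorem elephantStep_neg_half_pow [CharZero K] {c : K} (hc : c ^ 2 = 1) (n : ℕ) :
    elephantStep (-1 / 2) n ((C (1 / 2) * (X + C c)) ^ (n + 1)) =
      (C (1 / 2) * (X + C c)) ^ (n + 2) := by
  set w : K[X] := C (1 / 2) * (X + C c) with hw
  have hc' : C c ^ 2 = 1 := by rw [← C_pow, hc, C_1]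
  have hsq : X * w + C (1 / 2) ^ 2 * (1 - X ^ 2) = w ^ 2 := by
    rw [hw]
    linear_combination
      -(X ^ 2 + X * C c) * C (1 / 2) * C_one_div_two_mul_two K - C (1 / 2) ^ 2 * hc'
  have hw' : derivative w = C (1 / 2) := by rw [hw]; simp
  have hn : (n : K) + 1 ≠ 0 := by exact_mod_cast n.succ_ne_zero
  have hcoef : C (-1 / 2 / ((n : K) + 1)) * (C ((n : K) + 1) * C (1 / 2)) = -C (1 / 2) ^ 2 := by
    rw [← C_mul, ← C_mul, ← C_pow, ← C_neg]
    congr 1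
    field_simp
  rw [elephantStep, derivative_pow, Nat.add_sub_cancel, hw', Nat.cast_succ]
  linear_combination -(w ^ n * (1 - X ^ 2)) * hcoef + w ^ n * hsq

end ElephantStep

theorem elephantR_add_two (a : ℝ) (n : ℕ) :
    elephantR a (n + 2) = elephantStep a n (elephantR a (n + 1)) := by
  rw [elephantR, elephantStep]

theorem stmt_7 (n : ℕ) (hn : 1 ≤ n) :
    elephantR (-1/2) n =
      (C (1/2 : ℝ) * (X - 1)) ^ n + (C (1/2 : ℝ) * (X + 1)) ^ n := by
  obtain ⟨m, rfl⟩ := Nat.exists_eq_add_of_le' hn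
  rw [show (X - 1 : ℝ[X]) = X + C (-1) by simp [sub_eq_add_neg],
    show (X + 1 : ℝ[X]) = X + C 1 by simp]
  clear hn
  induction m with
  | zero =>
    rw [zero_add, pow_one, pow_one, elephantR, C_neg, C_1]
    linear_combination -X * C_one_div_two_mul_two ℝ
  | succ m ih =>
    rw [elephantR_add_two, ih, elephantStep_add, elephantStep_neg_half_pow (by norm_num),
      elephantStep_neg_half_pow (by norm_num)]
end

section
/- Let a > 0. For every n ≥ 1, the elephant polynomial R_n has exactly n real roots, which are mutually distinct and all lie in the open interval (−1, 1). Moreover the roots of R_n and those of R_{n+1} strictly interlace: between any two consecutive roots of R_{n+1} there is exactly one root of R_n. -/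
/-
If `R_n = c ∏ (X - α_k)` with `c > 0` and `-1 < α_1 < ⋯ < α_n < 1`, the recursion gives
`R_{n+1}(α_k) = -(a/n) (1 - α_k²) R_n'(α_k)`, whose sign alternates in `k` because the roots are
simple, while `R_{n+1}(-1) = (-1)^(n+1)` and `R_{n+1}(1) = 1`. Hence `R_{n+1}` changes sign on each
of the `n + 1` intervals into which the `α_k` cut `(-1, 1)`, and since its degree is at most
`n + 1` it has no other roots.
-/

open Polynomial

open Finset

theorem Fin.strictMono_snoc {α : Type*} [Preorder α] {n : ℕ} {f : Fin n → α} {a : α}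
    (hf : StrictMono f) (ha : ∀ j, f j < a) : StrictMono (Fin.snoc f a : Fin (n + 1) → α) := by
  intro i j hij
  cases i using Fin.lastCases with
  | last => exact absurd hij (Fin.le_last j).not_gt
  | cast i =>
    cases j using Fin.lastCases with
    | last => simpa using ha i
    | cast j => simpa using hf (Fin.castSucc_lt_castSucc_iff.mp hij)

theorem exists_strictMono_roots_of_alternating {f : ℝ → ℝ} (hf : Continuous f) {M : ℕ}
    {s : Fin (M + 1) → ℝ} (hs : StrictMono s) {e : ℕ}
    (hsign : ∀ i : Fin (M + 1), 0 < (-1) ^ ((i : ℕ) + e) * f (s i)) :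
    ∃ β : Fin M → ℝ, StrictMono β ∧ (∀ i, β i ∈ Set.Ioo (s i.castSucc) (s i.succ)) ∧
      ∀ i, f (β i) = 0 := by
  have hroot (i : Fin M) : ∃ x ∈ Set.Ioo (s i.castSucc) (s i.succ), f x = 0 := by
    set g : ℝ → ℝ := fun x ↦ (-1) ^ ((i : ℕ) + e) * f x
    have hleft : 0 < g (s i.castSucc) := hsign i.castSucc
    have hright : g (s i.succ) < 0 := by
      have := hsign i.succ
      simp only [Fin.val_succ, add_right_comm _ 1, pow_succ] at this
      simp only [g]; linarith
    obtain ⟨x, hx, hgx⟩ := intermediate_value_Ioo' (hs (Fin.castSucc_lt_succ (i := i))).le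
      (by fun_prop) ⟨hright, hleft⟩
    exact ⟨x, hx, by simpa [g] using hgx⟩
  choose β hβ hβroot using hroot
  refine ⟨β, fun i j hij ↦ ?_, hβ, hβroot⟩
  calc β i < s i.succ := (hβ i).2
    _ ≤ s j.castSucc := hs.monotone (Fin.succ_le_castSucc_iff.mpr hij)
    _ < β j := (hβ j).1

theorem eval_C_mul_prod_X_sub_C_eq_zero_iff {K : Type*} [Field K] {ι : Type*} [Fintype ι]
    {c : K} (hc : c ≠ 0) (γ : ι → K) (x : K) :
    eval x (C c * ∏ k, (X - C (γ k))) = 0 ↔ ∃ k, x = γ k := by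
  simp [eval_prod, prod_eq_zero_iff, sub_eq_zero, hc]

theorem eval_derivative_C_mul_prod_X_sub_C {R : Type*} [CommRing R] {ι : Type*} [Fintype ι]
    [DecidableEq ι] (c : R) (γ : ι → R) (k : ι) :
    eval (γ k) (derivative (C c * ∏ j, (X - C (γ j)))) =
      c * ∏ j ∈ univ.erase k, (γ k - γ j) := by
  rw [← mul_prod_erase _ _ (mem_univ k)]
  simp [eval_prod]

theorem neg_one_pow_mul_prod_erase_sub_pos {N : ℕ} {α : Fin N → ℝ} (hα : StrictMono α)
    (k : Fin N) : 0 < (-1) ^ (N - 1 - k) * ∏ j ∈ univ.erase k, (α k - α j) := by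
  have hsplit : univ.erase k = Iio k ∪ Ioi k := by
    ext j; simp
  have hbelow : 0 < ∏ j ∈ Iio k, (α k - α j) :=
    prod_pos fun j hj ↦ sub_pos.mpr (hα (mem_Iio.mp hj))
  have habove : 0 < ∏ j ∈ Ioi k, (α j - α k) :=
    prod_pos fun j hj ↦ sub_pos.mpr (hα (mem_Ioi.mp hj))
  have hflip : ∏ j ∈ Ioi k, (α k - α j) = (-1) ^ (N - 1 - k) * ∏ j ∈ Ioi k, (α j - α k) := by
    rw [← Fin.card_Ioi, ← prod_const, ← prod_mul_distrib]
    exact prod_congr rfl fun j _ ↦ by ring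
  have hsq : ((-1 : ℝ) ^ (N - 1 - k)) * (-1) ^ (N - 1 - k) = 1 := by rw [← mul_pow]; norm_num
  rw [hsplit, prod_union (disjoint_left.mpr fun j h1 h2 ↦ ?_), hflip]
  · rw [mul_left_comm, ← mul_assoc ((-1 : ℝ) ^ _), hsq, one_mul]
    exact mul_pos hbelow habove
  · exact (mem_Iio.mp h1).not_gt (mem_Ioi.mp h2)

theorem eq_C_leadingCoeff_mul_prod_X_sub_C {K : Type*} [Field K] {p : K[X]} (hp : p ≠ 0)
    {N : ℕ} (hdeg : p.natDegree ≤ N) {β : Fin N → K} (hβ : Function.Injective β)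
    (hroot : ∀ k, p.IsRoot (β k)) : p = C p.leadingCoeff * ∏ k, (X - C (β k)) := by
  have hmonic : (∏ k, (X - C (β k))).Monic := monic_prod_of_monic _ _ fun k _ ↦ monic_X_sub_C _
  have hQdeg : (∏ k, (X - C (β k))).natDegree = N := by
    simp [natDegree_prod_of_monic _ _ fun k _ ↦ monic_X_sub_C (β k)]
  obtain ⟨r, rfl⟩ : ∏ k, (X - C (β k)) ∣ p :=
    Fintype.prod_dvd_of_coprime (pairwise_coprime_X_sub_C hβ) fun k ↦ dvd_iff_isRoot.mpr (hroot k)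
  have hr : r ≠ 0 := right_ne_zero_of_mul hp
  have hrdeg : r.natDegree = 0 := by
    rw [natDegree_mul hmonic.ne_zero hr, hQdeg] at hdeg; omega
  rw [leadingCoeff_mul, hmonic.leadingCoeff, one_mul, mul_comm, leadingCoeff, hrdeg,
    ← eq_C_of_natDegree_eq_zero hrdeg]

def HasSimpleRootsInIoo (p : ℝ[X]) {N : ℕ} (α : Fin N → ℝ) : Prop :=
  StrictMono α ∧ (∀ k, α k ∈ Set.Ioo (-1 : ℝ) 1) ∧ ∃ c, 0 < c ∧ p = C c * ∏ k, (X - C (α k))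

theorem HasSimpleRootsInIoo.eval_eq_zero_iff {p : ℝ[X]} {N : ℕ} {α : Fin N → ℝ}
    (h : HasSimpleRootsInIoo p α) (x : ℝ) : eval x p = 0 ↔ ∃ k, x = α k := by
  obtain ⟨-, -, c, hc, rfl⟩ := h
  exact eval_C_mul_prod_X_sub_C_eq_zero_iff hc.ne' α x

section Elephant

variable (a : ℝ)

@[simp]
theorem eval_elephantR_add_two (n : ℕ) (x : ℝ) :
    eval x (elephantR a (n + 2)) = x * eval x (elephantR a (n + 1)) -
      a / (n + 1) * ((1 - x ^ 2) * eval x (derivative (elephantR a (n + 1)))) := by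
  simp [elephantR]

theorem eval_one_elephantR : ∀ n, eval 1 (elephantR a n) = 1
  | 0 | 1 => by simp [elephantR]
  | n + 2 => by simp [eval_one_elephantR (n + 1)]

theorem eval_neg_one_elephantR : ∀ n, eval (-1) (elephantR a n) = (-1) ^ n
  | 0 | 1 => by simp [elephantR]
  | n + 2 => by simp [eval_neg_one_elephantR (n + 1), pow_succ]

theorem natDegree_elephantR_le : ∀ n, (elephantR a n).natDegree ≤ n
  | 0 | 1 => by simp [elephantR]
  | n + 2 => by
    have ih := natDegree_elephantR_le (n + 1)
    have hderiv : (derivative (elephantR a (n + 1))).natDegree ≤ n :=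
      (natDegree_derivative_le _).trans (by omega)
    have hquad : (1 - X ^ 2 : ℝ[X]).natDegree ≤ 2 :=
      (natDegree_sub_le _ _).trans (max_le (by simp) (natDegree_X_pow_le 2))
    rw [elephantR]
    refine (natDegree_sub_le _ _).trans (max_le ?_ ?_)
    · exact natDegree_mul_le.trans (by grind [natDegree_X_le])
    · exact (natDegree_C_mul_le _ _).trans (natDegree_mul_le.trans (by omega))

variable {a}

theorem neg_one_pow_mul_eval_elephantR_pos (ha : 0 < a) {m : ℕ} {α : Fin (m + 1) → ℝ}
    (h : HasSimpleRootsInIoo (elephantR a (m + 1)) α) (i : Fin (m + 3)) :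
    0 < (-1) ^ ((i : ℕ) + m) *
      eval ((Fin.cons (-1) (Fin.snoc α 1) : Fin (m + 3) → ℝ) i) (elephantR a (m + 2)) := by
  cases i using Fin.cases with
  | zero =>
    simp [eval_neg_one_elephantR, ← pow_add]
  | succ j =>
    cases j using Fin.lastCases with
    | last =>
      simp only [Fin.cons_succ, Fin.snoc_last, eval_one_elephantR, Fin.val_succ, Fin.val_last,
        mul_one]
      rw [Even.neg_one_pow ⟨m + 1, by ring⟩]
      exact one_pos
    | cast k =>
      have hroot : eval (α k) (elephantR a (m + 1)) = 0 := (h.eval_eq_zero_iff _).mpr ⟨k, rfl⟩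
      obtain ⟨hα, hmem, c, hc, hfac⟩ := h
      have hderiv : eval (α k) (derivative (elephantR a (m + 1))) =
          c * ∏ j ∈ univ.erase k, (α k - α j) := by
        rw [hfac]; exact eval_derivative_C_mul_prod_X_sub_C c α k
      have hpow : (-1 : ℝ) ^ ((k : ℕ) + 1 + m) = -(-1) ^ (m + 1 - 1 - k) := by
        rw [show (k : ℕ) + 1 + m = (m + 1 - 1 - k) + 2 * k + 1 by omega, pow_succ, pow_add,
          pow_mul, neg_one_sq, one_pow, mul_one, mul_neg_one]
      have hquad : 0 < 1 - α k ^ 2 := by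
        obtain ⟨h1, h2⟩ := hmem k; nlinarith
      rw [Fin.cons_succ, Fin.snoc_castSucc, eval_elephantR_add_two, hroot, hderiv,
        Fin.val_succ, Fin.val_castSucc, hpow]
      refine (mul_pos (mul_pos (mul_pos (by positivity : 0 < a / (m + 1)) hquad) hc)
        (neg_one_pow_mul_prod_erase_sub_pos hα k)).trans_eq ?_
      ring

theorem HasSimpleRootsInIoo.exists_interlacing_succ (ha : 0 < a) {m : ℕ}
    {α : Fin (m + 1) → ℝ} (h : HasSimpleRootsInIoo (elephantR a (m + 1)) α) :
    ∃ β : Fin (m + 2) → ℝ, HasSimpleRootsInIoo (elephantR a (m + 2)) β ∧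
      ∀ k, β k.castSucc < α k ∧ α k < β k.succ := by
  set s : Fin (m + 3) → ℝ := Fin.cons (-1) (Fin.snoc α 1)
  have hs : StrictMono s := by
    refine Fin.strictMono_cons.mpr ⟨fun j ↦ ?_, Fin.strictMono_snoc h.1 fun k ↦ (h.2.1 k).2⟩
    cases j using Fin.lastCases with
    | last => simp
    | cast k => simpa using (h.2.1 k).1
  obtain ⟨β, hβ, hβs, hβroot⟩ := exists_strictMono_roots_of_alternating
    (elephantR a (m + 2)).continuous hs (neg_one_pow_mul_eval_elephantR_pos ha h)
  have hβmem (i : Fin (m + 2)) : β i ∈ Set.Ioo (-1 : ℝ) 1 :=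
    ⟨(hs.monotone (Fin.zero_le _)).trans_lt (hβs i).1,
      by simpa [s] using (hβs i).2.trans_le (hs.monotone (Fin.le_last _))⟩
  have hne : elephantR a (m + 2) ≠ 0 := fun h0 ↦ by
    simpa [h0] using eval_one_elephantR a (m + 2)
  have hfac := eq_C_leadingCoeff_mul_prod_X_sub_C hne (natDegree_elephantR_le a _)
    hβ.injective hβroot
  have hlc : 0 < (elephantR a (m + 2)).leadingCoeff := by
    have h1 := eval_one_elephantR a (m + 2)
    rw [hfac] at h1
    simp only [eval_mul, eval_C, eval_prod, eval_sub, eval_X] at h1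
    exact pos_of_mul_pos_left (h1 ▸ one_pos)
      (prod_nonneg fun i _ ↦ sub_nonneg.mpr (hβmem i).2.le)
  refine ⟨β, ⟨hβ, hβmem, _, hlc, hfac⟩, fun k ↦ ⟨?_, ?_⟩⟩
  · simpa [s] using (hβs k.castSucc).2
  · simpa [s] using (hβs k.succ).1

theorem HasSimpleRootsInIoo.exists_interlacing (ha : 0 < a) {n : ℕ} {α : Fin n → ℝ}
    (h : HasSimpleRootsInIoo (elephantR a n) α) :
    ∃ β : Fin (n + 1) → ℝ, HasSimpleRootsInIoo (elephantR a (n + 1)) β ∧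
      ∀ k, β k.castSucc < α k ∧ α k < β k.succ := by
  cases n with
  | zero =>
    refine ⟨![0], ⟨strictMono_vecEmpty, fun _ ↦ by simp, 1, one_pos, ?_⟩, finZeroElim⟩
    simp [elephantR]
  | succ m => exact h.exists_interlacing_succ ha

theorem exists_hasSimpleRootsInIoo_elephantR (ha : 0 < a) :
    ∀ n, ∃ α : Fin n → ℝ, HasSimpleRootsInIoo (elephantR a n) α
  | 0 => ⟨finZeroElim, Subsingleton.strictMono _, finZeroElim, 1, one_pos, by simp [elephantR]⟩
  | n + 1 =>
    have ⟨_, hα⟩ := exists_hasSimpleRootsInIoo_elephantR ha n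
    have ⟨β, hβ, _⟩ := hα.exists_interlacing ha
    ⟨β, hβ⟩

end Elephant

theorem stmt_13_general (a : ℝ) (ha : 0 < a) (n : ℕ) :
    ∃ (α : Fin n → ℝ) (β : Fin (n + 1) → ℝ),
      StrictMono α ∧ StrictMono β ∧
      (∀ k, α k ∈ Set.Ioo (-1 : ℝ) 1 ∧ (elephantR a n).eval (α k) = 0) ∧
      (∀ k, β k ∈ Set.Ioo (-1 : ℝ) 1 ∧ (elephantR a (n + 1)).eval (β k) = 0) ∧
      (∀ x : ℝ, (elephantR a n).eval x = 0 → ∃ k, x = α k) ∧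
      (∀ x : ℝ, (elephantR a (n + 1)).eval x = 0 → ∃ k, x = β k) ∧
      (∀ k : Fin n, β k.castSucc < α k ∧ α k < β k.succ) := by
  obtain ⟨α, hα⟩ := exists_hasSimpleRootsInIoo_elephantR ha n
  obtain ⟨β, hβ, hinterlace⟩ := hα.exists_interlacing ha
  exact ⟨α, β, hα.1, hβ.1, fun k ↦ ⟨hα.2.1 k, (hα.eval_eq_zero_iff _).mpr ⟨k, rfl⟩⟩,
    fun k ↦ ⟨hβ.2.1 k, (hβ.eval_eq_zero_iff _).mpr ⟨k, rfl⟩⟩,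
    fun x ↦ (hα.eval_eq_zero_iff x).mp, fun x ↦ (hβ.eval_eq_zero_iff x).mp, hinterlace⟩

theorem stmt_13 (a : ℝ) (ha : 0 < a) (n : ℕ) (hn : 1 ≤ n) :
    ∃ (α : Fin n → ℝ) (β : Fin (n + 1) → ℝ),
      StrictMono α ∧ StrictMono β ∧
      (∀ k, α k ∈ Set.Ioo (-1 : ℝ) 1 ∧ (elephantR a n).eval (α k) = 0) ∧
      (∀ k, β k ∈ Set.Ioo (-1 : ℝ) 1 ∧ (elephantR a (n + 1)).eval (β k) = 0) ∧
      (∀ x : ℝ, (elephantR a n).eval x = 0 → ∃ k, x = α k) ∧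
      (∀ x : ℝ, (elephantR a (n + 1)).eval x = 0 → ∃ k, x = β k) ∧
      (∀ k : Fin n, β k.castSucc < α k ∧ α k < β k.succ) :=
  stmt_13_general a ha n
end
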